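/- arXiv:2410.22540 — 5 statements merged into one kernel-verified Lean document; each statement's English description precedes it below -/
import Mathlib

section
/- Let X and Y be countable sets. The map h : D(X) × ∏_{x∈X} D(Y_⊥) → D(Y_⊥) defined by h(μ, (ν_x)_{x∈X}) := ∑_{x∈X} μ(x)·ν_x is continuous, where D(X) carries the subspace topology of the product topology on [0,1]^X, ∏_{x∈X} D(Y_⊥) carries the product topology with each factor a subspace of [0,1]^{Y_⊥}, and the codomain D(Y_⊥) carries the subspace topology of [0,1]^{Y_⊥}. -/
/-! A mixture `∑ₓ μ(x)·νₓ(y)` differs from its partial sum over a finite set `F` by at most the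
mass `1 - ∑_{x∈F} μ(x)` that `μ` puts outside `F`. Near `μ₀` this mass is uniformly small once
`F` captures almost all of `μ₀`, because `μ ↦ ∑_{x∈F} μ(x)` is continuous. So the mixture is a
locally uniform limit of finite sums, which are continuous in the product topology. -/

open scoped Classical
open Filter Topology

namespace DOL

/-- A discrete probability distribution on `X`: pointwise nonnegative with total mass 1. -/
def IsDist {X : Type*} (μ : X → ℝ) : Prop := (∀ x, 0 ≤ μ x) ∧ HasSum μ 1

/-- The point-mass (Dirac) distribution at `x`. -/
noncomputable def dirac {X : Type*} (x : X) : X → ℝ := fun y => if y = x then 1 else 0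

/-- The order `⊑_D` on distributions over `X_⊥ = Option X` (with `⊥ = none`):
pointwise comparison at proper states only. -/
def dle {X : Type*} (μ ν : Option X → ℝ) : Prop := ∀ x : X, μ (some x) ≤ ν (some x)

/-- Up-closure of a set of distributions over `X_⊥` (within `D(X_⊥)`). -/
def upClo {X : Type*} (S : Set (Option X → ℝ)) : Set (Option X → ℝ) :=
  {ν | IsDist ν ∧ ∃ μ ∈ S, dle μ ν}

/-- Convexity of a set of functions, with pointwise convex combinations. -/
def IsConvexSet {X : Type*} (S : Set (X → ℝ)) : Prop :=
  ∀ μ ∈ S, ∀ ν ∈ S, ∀ p : ℝ, 0 ≤ p → p ≤ 1 →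
    (fun x => p * μ x + (1 - p) * ν x) ∈ S

/-- Membership in `C(X)`: nonempty, consisting of distributions over `X_⊥`,
convex, (topologically) closed, and up-closed. -/
def memC {X : Type*} (S : Set (Option X → ℝ)) : Prop :=
  S.Nonempty ∧ (∀ μ ∈ S, IsDist μ) ∧ IsConvexSet S ∧ IsClosed S ∧ upClo S = S

/-- Bottom-lifting of a set-valued map: `f_⊥(⊥) = ↑{δ_⊥}`. -/
noncomputable def fbot {X Y : Type*} (f : X → Set (Option Y → ℝ)) :
    Option X → Set (Option Y → ℝ) :=
  fun x => match x with
  | some x => f x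
  | none => upClo {dirac (none : Option Y)}

/-- Kleisli extension: all convex mixtures `∑_{x ∈ supp μ} μ(x)·ν_x` with `μ ∈ S`
and `ν_x ∈ f_⊥(x)` on the support of `μ`. -/
noncomputable def kleisli {X Y : Type*} (f : X → Set (Option Y → ℝ))
    (S : Set (Option X → ℝ)) : Set (Option Y → ℝ) :=
  {ξ | ∃ μ ∈ S, ∃ ν : Option X → (Option Y → ℝ),
    (∀ x, 0 < μ x → ν x ∈ fbot f x) ∧ (∀ y, ξ y = ∑' x, μ x * ν x y)}

/-- Probabilistic choice between sets of distributions. -/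
def pchoice {X : Type*} (p : ℝ) (S T : Set (Option X → ℝ)) : Set (Option X → ℝ) :=
  {ξ | ∃ μ ∈ S, ∃ ν ∈ T, ξ = fun x => p * μ x + (1 - p) * ν x}

/-- The monad unit `η(x) = ↑{δ_x}`. -/
noncomputable def eta {X : Type*} (x : X) : Set (Option X → ℝ) := upClo {dirac (some x)}

/-- The loop characteristic functional. -/
noncomputable def Phi {St : Type*} (c : St → Set (Option St → ℝ)) (b : St → Bool)
    (f : St → Set (Option St → ℝ)) : St → Set (Option St → ℝ) :=
  fun σ => if b σ then kleisli f (c σ) else upClo {dirac (some σ)}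

theorem IsDist.le_one {X : Type*} {μ : X → ℝ} (hμ : IsDist μ) (x : X) : μ x ≤ 1 :=
  le_hasSum hμ.2 x fun j _ => hμ.1 j

theorem abs_tsum_mul_sub_sum_le {X : Type*} {μ f : X → ℝ} {m : ℝ} (hμ₀ : ∀ x, 0 ≤ μ x)
    (hμ : HasSum μ m) (hf₀ : ∀ x, 0 ≤ f x) (hf₁ : ∀ x, f x ≤ 1) (F : Finset X) :
    |∑' x, μ x * f x - ∑ x ∈ F, μ x * f x| ≤ m - ∑ x ∈ F, μ x := by
  have hle : ∀ x, μ x * f x ≤ μ x := fun x => mul_le_of_le_one_right (hμ₀ x) (hf₁ x)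
  have hnn : ∀ x, 0 ≤ μ x * f x := fun x => mul_nonneg (hμ₀ x) (hf₀ x)
  have hs : Summable fun x => μ x * f x := hμ.summable.of_nonneg_of_le hnn hle
  rw [← hs.sum_add_tsum_compl (s := F), ← hμ.tsum_eq, ← hμ.summable.sum_add_tsum_compl (s := F),
    add_sub_cancel_left, add_sub_cancel_left, abs_of_nonneg (tsum_nonneg fun _ => hnn _)]
  exact (hs.subtype _).tsum_le_tsum (fun x => hle x) (hμ.summable.subtype _)

theorem continuousOn_tsum_mul {X : Type*} :
    ContinuousOn (fun q : (X → ℝ) × (X → ℝ) => ∑' x, q.1 x * q.2 x)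
      ({μ | IsDist μ} ×ˢ {f | ∀ x, 0 ≤ f x ∧ f x ≤ 1}) := by
  rintro q₀ hq₀
  refine continuousWithinAt_of_locally_uniform_approx_of_continuousWithinAt hq₀ fun u hu => ?_
  obtain ⟨ε, hε, hεu⟩ := Metric.mem_uniformity_dist.1 hu
  obtain ⟨F, hF⟩ : ∃ F : Finset X, 1 - ε < ∑ x ∈ F, q₀.1 x :=
    (hq₀.1.2.eventually (lt_mem_nhds (sub_lt_self 1 hε))).exists
  have hmass : Continuous fun q : (X → ℝ) × (X → ℝ) => ∑ x ∈ F, q.1 x := by fun_prop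
  have hpartial : Continuous fun q : (X → ℝ) × (X → ℝ) => ∑ x ∈ F, q.1 x * q.2 x := by fun_prop
  refine ⟨_, inter_mem_nhdsWithin _ (hmass.continuousAt.eventually (lt_mem_nhds hF)),
    _, hpartial.continuousWithinAt, ?_⟩
  rintro q ⟨⟨hμ, hf⟩, hq⟩
  refine hεu ?_
  rw [Real.dist_eq]
  exact (abs_tsum_mul_sub_sum_le hμ.1 hμ.2 (fun x => (hf x).1) (fun x => (hf x).2) F).trans_lt
    (by linarith [show 1 - ε < ∑ x ∈ F, q.1 x from hq])

theorem mix_continuousOn_general {X Y : Type*} :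
    ContinuousOn
      (fun q : (X → ℝ) × (X → (Option Y → ℝ)) =>
        (fun y : Option Y => ∑' x, q.1 x * q.2 x y))
      ({μ : X → ℝ | IsDist μ} ×ˢ {ν : X → (Option Y → ℝ) | ∀ x, IsDist (ν x)}) := by
  refine continuousOn_pi.2 fun y => continuousOn_tsum_mul.comp
    (Continuous.continuousOn (by fun_prop : Continuous fun q : (X → ℝ) × (X → Option Y → ℝ) =>
      (q.1, fun x => q.2 x y))) ?_
  rintro ⟨μ, ν⟩ ⟨hμ, hν⟩
  exact ⟨hμ, fun x => ⟨(hν x).1 y, (hν x).le_one y⟩⟩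

/-- continuity of `h(μ, (ν_x)_x) = ∑_x μ(x)·ν_x` on `D(X) × ∏_x D(Y_⊥)`. -/
theorem mix_continuousOn {X Y : Type*} [Countable X] [Countable Y] :
    ContinuousOn
      (fun q : (X → ℝ) × (X → (Option Y → ℝ)) =>
        (fun y : Option Y => ∑' x, q.1 x * q.2 x y))
      ({μ : X → ℝ | IsDist μ} ×ˢ {ν : X → (Option Y → ℝ) | ∀ x, IsDist (ν x)}) :=
  mix_continuousOn_general

end DOL
end

section
/- Let X and Y be countable sets, f : X → C(Y), and S ∈ C(X). Then the Kleisli extension f†(S) is up-closed: if μ ∈ f†(S) and μ ⊑_D ν, then ν ∈ f†(S). -/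
open scoped Classical
open Filter Topology

namespace DOL

/-! Write `ξ = ∑ₓ μ(x)·νₓ` and `c = ξ(⊥)`. The excess `ρ - ξ` of a distribution `ρ ⊒ ξ` has
total mass `0`, is nonnegative on proper states, and equals `ρ(⊥) - c` at `⊥`. If `c = 0` this
forces `ρ = ξ`. Otherwise replace each `νₓ` by `νₓ + (νₓ(⊥)/c)·(ρ - ξ)`: this is again a
distribution above `νₓ` (its value at `⊥` is `νₓ(⊥)·ρ(⊥)/c`), hence lies in the up-closed set
`f_⊥(x)`, and since `∑ₓ μ(x)·νₓ(⊥) = c` the new mixture is exactly `ρ`. -/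

lemma memC.mem_of_dle {Y : Type*} {S : Set (Option Y → ℝ)} (hS : memC S)
    {μ ν : Option Y → ℝ} (hμ : μ ∈ S) (hν : IsDist ν) (hle : dle μ ν) : ν ∈ S := by
  rw [← hS.2.2.2.2]
  exact ⟨hν, μ, hμ, hle⟩

section Fbot

variable {X Y : Type*} {f : X → Set (Option Y → ℝ)} {x : Option X} {τ τ' : Option Y → ℝ}

lemma isDist_of_mem_fbot (hf : ∀ x, memC (f x)) (h : τ ∈ fbot f x) : IsDist τ := by
  cases x with
  | some x => exact (hf x).2.1 τ h
  | none => exact h.1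

lemma mem_fbot_of_dle (hf : ∀ x, memC (f x)) (h : τ ∈ fbot f x) (h' : IsDist τ')
    (hle : dle τ τ') : τ' ∈ fbot f x := by
  cases x with
  | some x => exact (hf x).mem_of_dle h h' hle
  | none =>
    refine ⟨h', dirac none, rfl, fun y => ?_⟩
    simpa [dirac] using h'.1 (some y)

end Fbot

section Mixture

variable {X Y : Type*} {μ : X → ℝ} {ν : X → Y → ℝ}

lemma IsDist.hasSum_mul_apply (hμ : IsDist μ) (hν : ∀ x, 0 < μ x → IsDist (ν x)) (x : X) :
    HasSum (fun y => μ x * ν x y) (μ x) := by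
  rcases (hμ.1 x).eq_or_lt with h | h
  · simp [← h]
  · simpa using (hν x h).2.mul_left (μ x)

lemma IsDist.mul_apply_nonneg (hμ : IsDist μ) (hν : ∀ x, 0 < μ x → IsDist (ν x)) (x : X) (y : Y) :
    0 ≤ μ x * ν x y := by
  rcases (hμ.1 x).eq_or_lt with h | h
  · simp [← h]
  · exact mul_nonneg h.le ((hν x h).1 y)

lemma IsDist.summable_mul_apply (hμ : IsDist μ) (hν : ∀ x, 0 < μ x → IsDist (ν x)) (y : Y) :
    Summable fun x => μ x * ν x y :=
  hμ.2.summable.of_nonneg_of_le (fun x => hμ.mul_apply_nonneg hν x y)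
    fun x => le_hasSum (hμ.hasSum_mul_apply hν x) y fun z _ => hμ.mul_apply_nonneg hν x z

theorem IsDist.isDist_tsum_mul (hμ : IsDist μ) (hν : ∀ x, 0 < μ x → IsDist (ν x)) :
    IsDist fun y => ∑' x, μ x * ν x y := by
  have hrow := hμ.hasSum_mul_apply hν
  have hsum : HasSum (fun p : X × Y => μ p.1 * ν p.1 p.2) 1 := by
    have hnonneg : 0 ≤ fun p : X × Y => μ p.1 * ν p.1 p.2 := fun p =>
      hμ.mul_apply_nonneg hν p.1 p.2
    have hsummable := (summable_prod_of_nonneg hnonneg).2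
      ⟨fun x => (hrow x).summable, by simpa only [fun x => (hrow x).tsum_eq] using hμ.2.summable⟩
    rw [← hμ.2.tsum_eq, ← tsum_congr fun x => (hrow x).tsum_eq,
      ← hsummable.tsum_prod' fun x => (hrow x).summable]
    exact hsummable.hasSum
  exact ⟨fun y => tsum_nonneg fun x => hμ.mul_apply_nonneg hν x y,
    ((Equiv.prodComm Y X).hasSum_iff.2 hsum).prod_fiberwise fun y =>
      (hμ.summable_mul_apply hν y).hasSum⟩

end Mixture

section Excess

variable {Y : Type*} {ξ ρ : Option Y → ℝ}

lemma hasSum_sub_of_isDist (hξ : IsDist ξ) (hρ : IsDist ρ) : HasSum (fun z => ρ z - ξ z) 0 := by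
  simpa using hρ.2.sub hξ.2

lemma eq_of_dle_of_apply_none_eq_zero (hξ : IsDist ξ) (hρ : IsDist ρ) (hle : dle ξ ρ)
    (h : ξ none = 0) : ρ = ξ := by
  have hnonneg : ∀ z, 0 ≤ ρ z - ξ z := by
    rintro (_ | y)
    · simpa [h] using hρ.1 none
    · exact sub_nonneg.2 (hle y)
  funext z
  exact sub_eq_zero.1 (congrFun ((hasSum_zero_iff_of_nonneg hnonneg).1
    (hasSum_sub_of_isDist hξ hρ)) z)

noncomputable def shiftExcess (ξ ρ τ : Option Y → ℝ) : Option Y → ℝ :=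
  fun z => τ z + τ none / ξ none * (ρ z - ξ z)

variable {τ : Option Y → ℝ}

lemma dle_shiftExcess (hτ : IsDist τ) (hξ : IsDist ξ) (hle : dle ξ ρ) :
    dle τ (shiftExcess ξ ρ τ) := fun y =>
  le_add_of_nonneg_right <|
    mul_nonneg (div_nonneg (hτ.1 none) (hξ.1 none)) (sub_nonneg.2 (hle y))

lemma isDist_shiftExcess (hτ : IsDist τ) (hξ : IsDist ξ) (hρ : IsDist ρ) (hle : dle ξ ρ)
    (hc : 0 < ξ none) : IsDist (shiftExcess ξ ρ τ) := by
  refine ⟨?_, ?_⟩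
  · rintro (_ | y)
    · have : shiftExcess ξ ρ τ none = τ none * ρ none / ξ none := by
        simp only [shiftExcess]; field_simp; ring
      rw [this]
      exact div_nonneg (mul_nonneg (hτ.1 none) (hρ.1 none)) hc.le
    · exact (hτ.1 (some y)).trans (dle_shiftExcess hτ hξ hle y)
  · have := hτ.2.add ((hasSum_sub_of_isDist hξ hρ).mul_left (τ none / ξ none))
    rwa [mul_zero, add_zero] at this

end Excess

theorem kleisli_upClosed_general {X Y : Type*}
    (f : X → Set (Option Y → ℝ)) (hf : ∀ x, memC (f x))
    (S : Set (Option X → ℝ)) (hS : memC S) :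
    ∀ μ ∈ kleisli f S, ∀ ν : Option Y → ℝ, IsDist ν → dle μ ν → ν ∈ kleisli f S := by
  rintro ξ ⟨μ, hμS, ν, hνf, hξ⟩ ρ hρ hle
  have hμ : IsDist μ := hS.2.1 μ hμS
  have hν : ∀ x, 0 < μ x → IsDist (ν x) := fun x hx => isDist_of_mem_fbot hf (hνf x hx)
  have hξd : IsDist ξ := by
    rw [funext hξ]
    exact hμ.isDist_tsum_mul hν
  rcases (hξd.1 none).eq_or_lt with hc | hc
  · rw [eq_of_dle_of_apply_none_eq_zero hξd hρ hle hc.symm]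
    exact ⟨μ, hμS, ν, hνf, hξ⟩
  have hshift : ∀ x, 0 < μ x → shiftExcess ξ ρ (ν x) ∈ fbot f x := fun x hx =>
    mem_fbot_of_dle hf (hνf x hx) (isDist_shiftExcess (hν x hx) hξd hρ hle hc)
      (dle_shiftExcess (hν x hx) hξd hle)
  refine ⟨μ, hμS, fun x => shiftExcess ξ ρ (ν x), hshift, fun z => ?_⟩
  calc ρ z = ξ z + ξ none * ((ρ z - ξ z) / ξ none) := by field_simp; ring
    _ = ∑' x, (μ x * ν x z + μ x * ν x none * ((ρ z - ξ z) / ξ none)) := by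
      rw [(hμ.summable_mul_apply hν z).tsum_add ((hμ.summable_mul_apply hν none).mul_right _),
        tsum_mul_right, ← hξ z, ← hξ none]
    _ = ∑' x, μ x * shiftExcess ξ ρ (ν x) z :=
      tsum_congr fun x => by simp only [shiftExcess]; ring

/-- the Kleisli extension `f†(S)` is up-closed. -/
theorem kleisli_upClosed {X Y : Type*} [Countable X] [Countable Y]
    (f : X → Set (Option Y → ℝ)) (hf : ∀ x, memC (f x))
    (S : Set (Option X → ℝ)) (hS : memC S) :
    ∀ μ ∈ kleisli f S, ∀ ν : Option Y → ℝ, IsDist ν → dle μ ν → ν ∈ kleisli f S :=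
  kleisli_upClosed_general f hf S hS

end DOL
end

section
/- (Monad right identity.) Let X and Y be countable sets and f : X → C(Y). Then for every x ∈ X, f†(η(x)) = f(x), where η(x) := ↑{δ_x}. -/
open scoped Classical
open Filter Topology

namespace DOL

lemma isDist_dirac {X : Type*} (a : X) : IsDist (dirac a) := by
  refine ⟨fun y => ?_, ?_⟩
  · unfold dirac; split <;> norm_num
  · convert hasSum_ite_eq a (1 : ℝ) using 2
    simp only [dirac]

lemma tsum_dirac_mul {X : Type*} (a : X) (g : X → ℝ) : ∑' z, dirac a z * g z = g a := by
  rw [tsum_eq_single a fun z hz => by simp [dirac, hz]]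
  simp [dirac]

lemma IsDist.eq_dirac_of_one_le {X : Type*} {μ : X → ℝ} (hμ : IsDist μ) {a : X}
    (ha : 1 ≤ μ a) : μ = dirac a := by
  obtain ⟨hpos, hsum⟩ := hμ
  funext z
  by_cases hz : z = a
  · subst hz
    simp only [dirac, if_true]
    exact le_antisymm (le_hasSum hsum z fun b _ => hpos b) ha
  · have hpair : μ a + μ z ≤ 1 := by
      rw [← Finset.sum_pair (Ne.symm hz)]
      exact sum_le_hasSum _ (fun b _ => hpos b) hsum
    simp only [dirac, hz, if_false]
    linarith [hpos z]

lemma eta_eq_singleton {X : Type*} (x : X) : eta x = {dirac (some x)} := by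
  ext μ
  constructor
  · rintro ⟨hμ, _, rfl, hle⟩
    exact hμ.eq_dirac_of_one_le (by simpa [dirac] using hle x)
  · rintro rfl
    exact ⟨isDist_dirac _, _, rfl, fun _ => le_rfl⟩

lemma kleisli_singleton_dirac {X Y : Type*} (f : X → Set (Option Y → ℝ)) (a : Option X) :
    kleisli f {dirac a} = fbot f a := by
  ext ξ
  constructor
  · rintro ⟨μ, rfl, ν, hν, hξ⟩
    have hξν : ξ = ν a := funext fun y => (hξ y).trans (tsum_dirac_mul a fun z => ν z y)
    exact hξν ▸ hν a (by simp [dirac])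
  · intro hξ
    refine ⟨dirac a, rfl, fun _ => ξ, fun z hz => ?_, fun y => (tsum_dirac_mul a fun _ => ξ y).symm⟩
    have hza : z = a := by
      by_contra h
      simp [dirac, h] at hz
    exact hza ▸ hξ

theorem kleisli_comp_eta_general {X Y : Type*}
    (f : X → Set (Option Y → ℝ)) (x : X) :
    kleisli f (eta x) = f x := by
  rw [eta_eq_singleton, kleisli_singleton_dirac]
  rfl

/-- monad right identity: `f†(η(x)) = f(x)`. -/
theorem kleisli_comp_eta {X Y : Type*} [Countable X] [Countable Y]
    (f : X → Set (Option Y → ℝ)) (hf : ∀ x, memC (f x)) (x : X) :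
    kleisli f (eta x) = f x :=
  kleisli_comp_eta_general f x

end DOL
end

section
/- (C(X) is a dcpo under the Smyth order.) Let X be a countable set and let {S_i}_{i∈I} be a nonempty family of elements of C(X) that is directed under reverse inclusion (for any i, j ∈ I there is k ∈ I with S_k ⊆ S_i ∩ S_j). Then the intersection ∩_{i∈I} S_i is again an element of C(X); in particular it is nonempty, convex, closed in the product topology on [0,1]^{X_⊥}, and up-closed. -/
/-!
Every distribution takes values in `[0,1]`, so each `S i` is a closed subset of the
Tychonoff cube `[0,1]^{X_⊥}` and hence compact. A directed family of nonempty compact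
closed sets has nonempty intersection; convexity, closedness and up-closure pass to
intersections directly.
-/

open scoped Classical
open Filter Topology

namespace DOL

theorem IsDist.mem_Icc {X : Type*} {μ : X → ℝ} (hμ : IsDist μ) (x : X) : μ x ∈ Set.Icc 0 1 :=
  ⟨hμ.1 x, le_hasSum hμ.2 x fun y _ => hμ.1 y⟩

theorem isCompact_of_isClosed_of_isDist {X : Type*} {S : Set (X → ℝ)} (hS : IsClosed S)
    (hdist : ∀ μ ∈ S, IsDist μ) : IsCompact S :=
  (isCompact_univ_pi fun _ => isCompact_Icc).of_isClosed_subset hS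
    fun μ hμ x _ => (hdist μ hμ).mem_Icc x

theorem IsConvexSet.iInter {X I : Type*} {S : I → Set (X → ℝ)} (hS : ∀ i, IsConvexSet (S i)) :
    IsConvexSet (⋂ i, S i) := fun μ hμ ν hν p hp hp1 =>
  Set.mem_iInter.2 fun i =>
    hS i μ (Set.mem_iInter.1 hμ i) ν (Set.mem_iInter.1 hν i) p hp hp1

theorem upClo_mono {X : Type*} {S T : Set (Option X → ℝ)} (h : S ⊆ T) : upClo S ⊆ upClo T :=
  fun _ ⟨hν, μ, hμ, hle⟩ => ⟨hν, μ, h hμ, hle⟩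

theorem subset_upClo {X : Type*} {S : Set (Option X → ℝ)} (hdist : ∀ μ ∈ S, IsDist μ) :
    S ⊆ upClo S :=
  fun μ hμ => ⟨hdist μ hμ, μ, hμ, fun _ => le_rfl⟩

theorem upClo_iInter_eq {X I : Type*} {S : I → Set (Option X → ℝ)}
    (hdist : ∀ μ ∈ ⋂ i, S i, IsDist μ) (hup : ∀ i, upClo (S i) = S i) :
    upClo (⋂ i, S i) = ⋂ i, S i :=
  (Set.subset_iInter fun i => (hup i).subset.trans' (upClo_mono (Set.iInter_subset S i))).antisymm
    (subset_upClo hdist)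

theorem directed_iInter_memC_general {X : Type*} {I : Type*} [Nonempty I]
    (S : I → Set (Option X → ℝ)) (hC : ∀ i, memC (S i))
    (hdir : ∀ i j, ∃ k, S k ⊆ S i ∩ S j) :
    memC (⋂ i, S i) := by
  simp only [memC, forall_and] at hC
  obtain ⟨hne, hdist, hconv, hclosed, hup⟩ := hC
  have hdist_iInter : ∀ μ ∈ ⋂ i, S i, IsDist μ := fun μ hμ =>
    hdist (Classical.arbitrary I) μ (Set.mem_iInter.1 hμ _)
  have hne_iInter : (⋂ i, S i).Nonempty := by
    refine IsCompact.nonempty_iInter_of_directed_nonempty_isCompact_isClosed S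
      (fun i j => ?_) hne (fun i => isCompact_of_isClosed_of_isDist (hclosed i) (hdist i)) hclosed
    obtain ⟨k, hk⟩ := hdir i j
    exact ⟨k, hk.trans Set.inter_subset_left, hk.trans Set.inter_subset_right⟩
  exact ⟨hne_iInter, hdist_iInter, IsConvexSet.iInter hconv, isClosed_iInter hclosed,
    upClo_iInter_eq hdist_iInter hup⟩

/-- `C(X)` is a dcpo under the Smyth order: the intersection of a
nonempty reverse-inclusion-directed family of elements of `C(X)` is in `C(X)`. -/
theorem directed_iInter_memC {X : Type*} [Countable X] {I : Type*} [Nonempty I]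
    (S : I → Set (Option X → ℝ)) (hC : ∀ i, memC (S i))
    (hdir : ∀ i j, ∃ k, S k ⊆ S i ∩ S j) :
    memC (⋂ i, S i) :=
  directed_iInter_memC_general S hC hdir

end DOL
end

section
/- (Decomposition of larger distributions along convex combinations.) Let Σ be a countable set, p ∈ [0,1], and μ, μ₁, μ₂, ν ∈ D(Σ_⊥) with μ = p·μ₁ + (1−p)·μ₂. If μ ⊑_D ν, then there exist ν₁, ν₂ ∈ D(Σ_⊥) such that ν = p·ν₁ + (1−p)·ν₂ and μ₁ ⊑_D ν₁ and μ₂ ⊑_D ν₂. -/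
/-!
Write `ν = μ + g`. Then `g` sums to `0` and is nonnegative at proper states, so its only possibly
negative value is `g ⊥ = ν ⊥ - μ ⊥`. Put `νᵢ = μᵢ + cᵢ * g` with `cᵢ = μᵢ ⊥ / μ ⊥` (or `cᵢ = 1` when
`μ ⊥ = 0`, which forces `g ⊥ = 0`). The `cᵢ` mix to `1`, so the `νᵢ` mix to `ν`, and at `⊥` each
`μᵢ` gives up only its proportional share of the mass `ν` moves away from `⊥`:
`νᵢ ⊥ = μᵢ ⊥ * ν ⊥ / μ ⊥ ≥ 0`.
-/

open scoped Classical
open Filter Topology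

namespace DOL

section

variable {X : Type*}

theorem apply_none_le_of_dle {μ ν : Option X → ℝ} (hμ : HasSum μ 1) (hν : HasSum ν 1)
    (hle : dle μ ν) : ν none ≤ μ none := by
  have hμ' := hμ.update none 0
  have hν' := hν.update none 0
  have hle' : Function.update μ none 0 ≤ Function.update ν none 0 := by
    rintro (_ | x)
    · simp
    · simpa using hle x
  linarith [hasSum_le hle' hμ' hν']

theorem exists_mixing_weights_of_le {p a a₁ a₂ b : ℝ} (ha : a = p * a₁ + (1 - p) * a₂)
    (ha₁ : 0 ≤ a₁) (ha₂ : 0 ≤ a₂) (hb : 0 ≤ b) (hba : b ≤ a) :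
    ∃ c₁ c₂ : ℝ, 0 ≤ c₁ ∧ 0 ≤ c₂ ∧ p * c₁ + (1 - p) * c₂ = 1 ∧
      c₁ * (a - b) ≤ a₁ ∧ c₂ * (a - b) ≤ a₂ := by
  rcases (hb.trans hba).eq_or_lt with rfl | hpos
  · obtain rfl : b = 0 := le_antisymm hba hb
    exact ⟨1, 1, zero_le_one, zero_le_one, by ring, by simpa, by simpa⟩
  have share_le {aᵢ : ℝ} (haᵢ : 0 ≤ aᵢ) : aᵢ / a * (a - b) ≤ aᵢ := by
    rw [div_mul_eq_mul_div, div_le_iff₀ hpos]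
    nlinarith
  refine ⟨a₁ / a, a₂ / a, by positivity, by positivity, ?_, share_le ha₁, share_le ha₂⟩
  field_simp
  linarith

theorem IsDist.add_mul_sub {μ' μ ν : Option X → ℝ} {c : ℝ} (h' : IsDist μ') (hμ : HasSum μ 1)
    (hν : HasSum ν 1) (hle : dle μ ν) (hc : 0 ≤ c) (hnone : c * (μ none - ν none) ≤ μ' none) :
    IsDist fun x => μ' x + c * (ν x - μ x) := by
  refine ⟨?_, by simpa using h'.2.add ((hν.sub hμ).mul_left c)⟩
  rintro (_ | x)
  · linarith
  · exact add_nonneg (h'.1 _) (mul_nonneg hc (sub_nonneg.2 (hle x)))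

theorem dle_add_mul_sub {μ' μ ν : Option X → ℝ} {c : ℝ} (hc : 0 ≤ c) (hle : dle μ ν) :
    dle μ' fun x => μ' x + c * (ν x - μ x) := fun x =>
  le_add_of_nonneg_right (mul_nonneg hc (sub_nonneg.2 (hle x)))

end

theorem decompose_above_convex_general {St : Type*}
    (p : ℝ)
    (μ μ₁ μ₂ ν : Option St → ℝ)
    (hμ : IsDist μ) (h1 : IsDist μ₁) (h2 : IsDist μ₂) (hν : IsDist ν)
    (hmix : μ = fun σ => p * μ₁ σ + (1 - p) * μ₂ σ)
    (hle : dle μ ν) :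
    ∃ ν₁ ν₂ : Option St → ℝ, IsDist ν₁ ∧ IsDist ν₂ ∧
      (ν = fun σ => p * ν₁ σ + (1 - p) * ν₂ σ) ∧ dle μ₁ ν₁ ∧ dle μ₂ ν₂ := by
  have hmix_none : μ none = p * μ₁ none + (1 - p) * μ₂ none := by rw [hmix]
  obtain ⟨c₁, c₂, hc₁, hc₂, hc, hc₁_le, hc₂_le⟩ := exists_mixing_weights_of_le hmix_none
    (h1.1 none) (h2.1 none) (hν.1 none) (apply_none_le_of_dle hμ.2 hν.2 hle)
  refine ⟨_, _, h1.add_mul_sub hμ.2 hν.2 hle hc₁ hc₁_le, h2.add_mul_sub hμ.2 hν.2 hle hc₂ hc₂_le,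
    ?_, dle_add_mul_sub hc₁ hle, dle_add_mul_sub hc₂ hle⟩
  funext x
  have hmix_x : μ x = p * μ₁ x + (1 - p) * μ₂ x := by rw [hmix]
  linear_combination hmix_x + (μ x - ν x) * hc

/-- decomposition of larger distributions along convex combinations. -/
theorem decompose_above_convex {St : Type*} [Countable St]
    (p : ℝ) (hp0 : 0 ≤ p) (hp1 : p ≤ 1)
    (μ μ₁ μ₂ ν : Option St → ℝ)
    (hμ : IsDist μ) (h1 : IsDist μ₁) (h2 : IsDist μ₂) (hν : IsDist ν)
    (hmix : μ = fun σ => p * μ₁ σ + (1 - p) * μ₂ σ)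
    (hle : dle μ ν) :
    ∃ ν₁ ν₂ : Option St → ℝ, IsDist ν₁ ∧ IsDist ν₂ ∧
      (ν = fun σ => p * ν₁ σ + (1 - p) * ν₂ σ) ∧ dle μ₁ ν₁ ∧ dle μ₂ ν₂ :=
  decompose_above_convex_general p μ μ₁ μ₂ ν hμ h1 h2 hν hmix hle

end DOL
end
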